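/- arXiv:2101.12651 — 2 statements merged into one kernel-verified Lean document; each statement's English description precedes it below -/
import Mathlib

section
/- Let μ, ν be probability measures on ℝ with finite first moment such that μ is smaller than ν in the convex order, and let π be a coupling between μ and ν with disintegration π(dx,dy) = μ(dx) π_x(dy). Then the infimum over all martingale couplings M between μ and ν of the adapted Wasserstein distance AW₁(π, M) is bounded below by ∫_ℝ |∫_ℝ y π_x(dy) − x| μ(dx). -/
open MeasureTheory ProbabilityTheory Set Filter

noncomputable section

/-- Lebesgue measure restricted to `(0,1)`. -/
def lam01 : Measure ℝ := volume.restrict (Set.Ioo 0 1)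

/-- Cumulative distribution function `F_η(x) = η((-∞, x])`. -/
def Fcdf (η : Measure ℝ) (x : ℝ) : ℝ := (η (Set.Iic x)).toReal

/-- Left limit of the cumulative distribution function, `F_η(x-) = η((-∞, x))`. -/
def FcdfL (η : Measure ℝ) (x : ℝ) : ℝ := (η (Set.Iio x)).toReal

/-- Quantile function `F_η^{-1}(u) = inf {x : F_η(x) ≥ u}`. -/
def qf (η : Measure ℝ) (u : ℝ) : ℝ := sInf {x | u ≤ Fcdf η x}

/-- `π` is a coupling between `μ` and `ν`. -/
def IsCoupling (π : Measure (ℝ × ℝ)) (μ ν : Measure ℝ) : Prop :=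
  π.map Prod.fst = μ ∧ π.map Prod.snd = ν

/-- `W_ρ^ρ(η, η')`, the Wasserstein distance of order `ρ` raised to the power `ρ`. -/
def Wr (ρ : ℝ) (η η' : Measure ℝ) : ℝ :=
  sInf {c | ∃ π : Measure (ℝ × ℝ), IsCoupling π η η' ∧ c = ∫ p, |p.1 - p.2| ^ ρ ∂π}

/-- The Wasserstein distance of order `ρ`. -/
def W (ρ : ℝ) (η η' : Measure ℝ) : ℝ := Wr ρ η η' ^ (1 / ρ)

/-- The stochastic order `η ≤_st η'`: the quantile functions are ordered on `(0,1)`. -/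
def StochOrder (η η' : Measure ℝ) : Prop := ∀ u ∈ Set.Ioo (0 : ℝ) 1, qf η u ≤ qf η' u

/-- The convex order `μ ≤_cx ν`: `∫ f dμ ≤ ∫ f dν` for every (integrable) convex `f`. -/
def ConvexOrder (μ ν : Measure ℝ) : Prop :=
  ∀ f : ℝ → ℝ, ConvexOn ℝ Set.univ f → Integrable f μ → Integrable f ν →
    ∫ x, f x ∂μ ≤ ∫ x, f x ∂ν

/-- `AW_ρ^ρ(π, π')`, the adapted Wasserstein distance of order `ρ` raised to the power `ρ`:
the infimum over couplings `χ` between the first marginals of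
`∫ (|x-x'|^ρ + W_ρ^ρ(π_x, π'_{x'})) dχ`, where `κ, κ'` are disintegration kernels of `π, π'`. -/
def AWr (ρ : ℝ) (π π' : Measure (ℝ × ℝ)) : ℝ :=
  sInf {c | ∃ (χ : Measure (ℝ × ℝ)) (κ κ' : Kernel ℝ ℝ),
      IsCoupling χ (π.map Prod.fst) (π'.map Prod.fst) ∧
      π = (π.map Prod.fst).compProd κ ∧ π' = (π'.map Prod.fst).compProd κ' ∧
      c = ∫ q, (|q.1 - q.2| ^ ρ + Wr ρ (κ q.1) (κ' q.2)) ∂χ}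

/-- The adapted Wasserstein distance of order `ρ`. -/
def AW (ρ : ℝ) (π π' : Measure (ℝ × ℝ)) : ℝ := AWr ρ π π' ^ (1 / ρ)

/-- The lifted adapted Wasserstein distance of order `ρ`, raised to the power `ρ`, between the
lifted couplings with first marginals `μ, μ'` and kernels `p, p'`. -/
def lAWr (ρ : ℝ) (μ : Measure ℝ) (p : ℝ → Measure ℝ) (μ' : Measure ℝ)
    (p' : ℝ → Measure ℝ) : ℝ :=
  sInf {c | ∃ χ : Measure (ℝ × ℝ), IsCoupling χ lam01 lam01 ∧
      c = ∫ q, (|q.1 - q.2| ^ ρ + |qf μ q.1 - qf μ' q.2| ^ ρ + Wr ρ (p q.1) (p' q.2)) ∂χ}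

/-- The probability kernel `p` encodes a lifted coupling
`λ_{(0,1)}(du) δ_{F_μ^{-1}(u)}(dx) p_u(dy)` between `μ` and `ν`. -/
def IsLiftedCoupling (μ ν : Measure ℝ) (p : ℝ → Measure ℝ) : Prop :=
  Measurable p ∧ (∀ u, IsProbabilityMeasure (p u)) ∧ lam01.bind p = ν

/-- The probability kernel `m` encodes a lifted martingale coupling between `μ` and `ν`. -/
def IsLiftedMartingale (μ ν : Measure ℝ) (m : ℝ → Measure ℝ) : Prop :=
  IsLiftedCoupling μ ν m ∧ ∀ᵐ u ∂lam01, (∫ y, y ∂(m u)) = qf μ u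

end

/-!
Fix a coupling `χ` of `μ` with itself. For `χ`-a.e. `(x, x')` the martingale property
`mean M_{x'} = x'`, the triangle inequality and `|mean η - mean η'| ≤ W₁(η, η')` give
`|mean π_x - x| ≤ |x - x'| + |mean π_x - mean M_{x'}| ≤ |x - x'| + W₁(π_x, M_{x'})`,
and integrating against `χ` gives the bound. As the right-hand side is a Bochner integral, the
integrand must also be shown integrable; its measurability in `(x, x')` comes from the formula
`W₁(η, η') = ∫ |F_η - F_η'|`, which follows from the layer-cake representation of `|y - y'|`
and is attained by the quantile coupling.
-/

open scoped symmDiff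

lemma Set.Ici_symmDiff_Ici {α : Type*} [LinearOrder α] (a b : α) :
    Ici a ∆ Ici b = Ico (min a b) (max a b) := by
  ext x
  simp only [mem_symmDiff, mem_Ici, mem_Ico, min_le_iff, lt_max_iff]
  grind

lemma Set.Iic_symmDiff_Iic {α : Type*} [LinearOrder α] (a b : α) :
    Iic a ∆ Iic b = Ioc (min a b) (max a b) := by
  ext x
  simp only [mem_symmDiff, mem_Iic, mem_Ioc, min_lt_iff, le_max_iff]
  grind

lemma volume_Ici_symmDiff_Ici (a b : ℝ) : volume (Ici a ∆ Ici b) = ENNReal.ofReal |a - b| := by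
  rw [Ici_symmDiff_Ici, Real.volume_Ico, max_sub_min_eq_abs']

instance : IsProbabilityMeasure lam01 :=
  ⟨by simp [lam01, Real.volume_Ioo]⟩

lemma ae_mem_Ioo_lam01 : ∀ᵐ u ∂lam01, u ∈ Ioo (0 : ℝ) 1 :=
  ae_restrict_mem measurableSet_Ioo

lemma lam01_Iic {a : ℝ} (ha : a ∈ Icc (0 : ℝ) 1) : lam01 (Iic a) = ENNReal.ofReal a := by
  have hset : Iic a ∩ Icc 0 1 = Icc 0 a :=
    ext fun _ => ⟨fun ⟨hx, h0, _⟩ => ⟨h0, hx⟩, fun ⟨h0, hx⟩ => ⟨hx, h0, hx.trans ha.2⟩⟩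
  rw [lam01, Measure.restrict_congr_set Ioo_ae_eq_Icc, Measure.restrict_apply measurableSet_Iic,
    hset, Real.volume_Icc, sub_zero]

lemma lam01_Iic_symmDiff_Iic {a b : ℝ} (ha : a ∈ Icc (0 : ℝ) 1) (hb : b ∈ Icc (0 : ℝ) 1) :
    lam01 (Iic a ∆ Iic b) = ENNReal.ofReal |a - b| := by
  rw [Iic_symmDiff_Iic, ← Iic_sdiff_Iic,
    measure_sdiff (Iic_subset_Iic.2 min_le_max) measurableSet_Iic.nullMeasurableSet
      (measure_ne_top _ _),
    lam01_Iic ⟨le_max_of_le_left ha.1, max_le ha.2 hb.2⟩,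
    lam01_Iic ⟨le_min ha.1 hb.1, min_le_of_left_le ha.2⟩,
    ← ENNReal.ofReal_sub _ (le_min ha.1 hb.1), max_sub_min_eq_abs']

section Quantile

variable {η : Measure ℝ} [IsProbabilityMeasure η]

lemma fcdf_eq_cdf : Fcdf η = cdf η := by
  funext x
  rw [Fcdf, cdf_eq_real, measureReal_def]

lemma fcdf_mem_Icc (t : ℝ) : Fcdf η t ∈ Icc (0 : ℝ) 1 := by
  rw [fcdf_eq_cdf]
  exact ⟨cdf_nonneg η t, cdf_le_one η t⟩

lemma qf_le_iff {u t : ℝ} (hu : u ∈ Ioo (0 : ℝ) 1) : qf η u ≤ t ↔ u ≤ Fcdf η t := by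
  rw [qf, fcdf_eq_cdf]
  have hne : {x | u ≤ cdf η x}.Nonempty :=
    ((tendsto_cdf_atTop η).eventually (eventually_ge_nhds hu.2)).exists
  have hbdd : BddBelow {x | u ≤ cdf η x} := by
    obtain ⟨x₀, hx₀⟩ :=
      eventually_atBot.1 ((tendsto_cdf_atBot η).eventually (eventually_lt_nhds hu.1))
    exact ⟨x₀, fun x hx => le_of_not_gt fun hlt => (hx₀ x hlt.le).not_ge hx⟩
  refine ⟨fun h => ?_, fun h => csInf_le hbdd h⟩
  rw [← (cdf η).iInf_Ioi_eq t]
  refine le_ciInf fun s => ?_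
  obtain ⟨x, hx, hxs⟩ := (csInf_lt_iff hbdd hne).1 (h.trans_lt s.2)
  exact hx.trans (monotone_cdf η hxs.le)

lemma monotoneOn_qf : MonotoneOn (qf η) (Ioo 0 1) := fun _ hu _ hv huv =>
  (qf_le_iff hu).2 (huv.trans ((qf_le_iff hv).1 le_rfl))

lemma aemeasurable_qf : AEMeasurable (qf η) lam01 :=
  aemeasurable_restrict_of_monotoneOn measurableSet_Ioo monotoneOn_qf

lemma qf_preimage_Iic_ae_eq (t : ℝ) : qf η ⁻¹' Iic t =ᵐ[lam01] Iic (Fcdf η t) :=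
  eventuallyEq_set.2 (ae_mem_Ioo_lam01.mono fun _ hu => qf_le_iff hu)

lemma map_qf_lam01 : lam01.map (qf η) = η := by
  have := Measure.isProbabilityMeasure_map (μ := lam01) (aemeasurable_qf (η := η))
  refine Measure.ext_of_Iic _ _ fun t => ?_
  rw [Measure.map_apply_of_aemeasurable aemeasurable_qf measurableSet_Iic,
    measure_congr (qf_preimage_Iic_ae_eq t), lam01_Iic (fcdf_mem_Icc t), Fcdf,
    ENNReal.ofReal_toReal (measure_ne_top _ _)]

end Quantile

namespace IsCoupling

variable {π₀ : Measure (ℝ × ℝ)} {p q : Measure ℝ}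

lemma isProbabilityMeasure [IsProbabilityMeasure p] (h : IsCoupling π₀ p q) :
    IsProbabilityMeasure π₀ :=
  have : IsProbabilityMeasure (π₀.map Prod.fst) := h.1 ▸ ‹_›
  Measure.isProbabilityMeasure_of_map Prod.fst

lemma ae_comp_fst (h : IsCoupling π₀ p q) {P : ℝ → Prop} (hP : ∀ᵐ x ∂p, P x) :
    ∀ᵐ z ∂π₀, P z.1 :=
  ae_of_ae_map measurable_fst.aemeasurable (h.1 ▸ hP)

lemma ae_comp_snd (h : IsCoupling π₀ p q) {P : ℝ → Prop} (hP : ∀ᵐ y ∂q, P y) :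
    ∀ᵐ z ∂π₀, P z.2 :=
  ae_of_ae_map measurable_snd.aemeasurable (h.2 ▸ hP)

lemma integrable_comp_fst (h : IsCoupling π₀ p q) {f : ℝ → ℝ} (hf : Integrable f p) :
    Integrable (fun z => f z.1) π₀ :=
  (h.1 ▸ hf).comp_measurable measurable_fst

lemma integrable_comp_snd (h : IsCoupling π₀ p q) {f : ℝ → ℝ} (hf : Integrable f q) :
    Integrable (fun z => f z.2) π₀ :=
  (h.2 ▸ hf).comp_measurable measurable_snd

lemma integral_comp_fst (h : IsCoupling π₀ p q) {f : ℝ → ℝ} (hf : AEStronglyMeasurable f p) :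
    ∫ z, f z.1 ∂π₀ = ∫ x, f x ∂p := by
  rw [← h.1] at hf ⊢
  exact (integral_map measurable_fst.aemeasurable hf).symm

lemma integral_comp_snd (h : IsCoupling π₀ p q) {f : ℝ → ℝ} (hf : AEStronglyMeasurable f q) :
    ∫ z, f z.2 ∂π₀ = ∫ y, f y ∂q := by
  rw [← h.2] at hf ⊢
  exact (integral_map measurable_snd.aemeasurable hf).symm

lemma ofReal_abs_fcdf_sub_le [IsProbabilityMeasure p] (h : IsCoupling π₀ p q) (t : ℝ) :
    ENNReal.ofReal |Fcdf p t - Fcdf q t| ≤ π₀ ({z | z.1 ≤ t} ∆ {z | z.2 ≤ t}) := by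
  have := h.isProbabilityMeasure
  have hfst : Fcdf p t = π₀.real {z | z.1 ≤ t} := by
    rw [Fcdf, ← h.1, Measure.map_apply measurable_fst measurableSet_Iic]; rfl
  have hsnd : Fcdf q t = π₀.real {z | z.2 ≤ t} := by
    rw [Fcdf, ← h.2, Measure.map_apply measurable_snd measurableSet_Iic]; rfl
  rw [hfst, hsnd]
  exact ENNReal.ofReal_le_of_le_toReal (abs_measureReal_sub_le_measureReal_symmDiff
    (measurableSet_le measurable_fst measurable_const).nullMeasurableSet
    (measurableSet_le measurable_snd measurable_const).nullMeasurableSet)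

end IsCoupling

lemma isCoupling_prod (p q : Measure ℝ) [IsProbabilityMeasure p] [IsProbabilityMeasure q] :
    IsCoupling (p.prod q) p q :=
  ⟨by simp, by simp⟩

lemma isCoupling_map_diag (p : Measure ℝ) : IsCoupling (p.map fun x => (x, x)) p p := by
  constructor <;>
  · rw [Measure.map_map (by fun_prop) (by fun_prop)]
    exact Measure.map_id

noncomputable def quantileCoupling (p q : Measure ℝ) : Measure (ℝ × ℝ) :=
  lam01.map fun u => (qf p u, qf q u)

lemma isCoupling_quantileCoupling (p q : Measure ℝ) [IsProbabilityMeasure p]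
    [IsProbabilityMeasure q] : IsCoupling (quantileCoupling p q) p q := by
  have hpq : AEMeasurable (fun u => (qf p u, qf q u)) lam01 :=
    aemeasurable_qf.prodMk aemeasurable_qf
  unfold quantileCoupling
  constructor
  · rw [AEMeasurable.map_map_of_aemeasurable measurable_fst.aemeasurable hpq]
    exact map_qf_lam01
  · rw [AEMeasurable.map_map_of_aemeasurable measurable_snd.aemeasurable hpq]
    exact map_qf_lam01

/-- The quantile coupling is comonotone: it separates the pairs `(qf p u, qf q u)` by `t`
exactly when `u` lies between `Fcdf p t` and `Fcdf q t`. -/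
lemma quantileCoupling_symmDiff (p q : Measure ℝ) [IsProbabilityMeasure p]
    [IsProbabilityMeasure q] (t : ℝ) :
    quantileCoupling p q ({z | z.1 ≤ t} ∆ {z | z.2 ≤ t}) =
      ENNReal.ofReal |Fcdf p t - Fcdf q t| := by
  rw [quantileCoupling, Measure.map_apply_of_aemeasurable (aemeasurable_qf.prodMk aemeasurable_qf)
      ((measurableSet_le measurable_fst measurable_const).symmDiff
        (measurableSet_le measurable_snd measurable_const)),
    preimage_symmDiff]
  exact (measure_congr ((qf_preimage_Iic_ae_eq t).symmDiff (qf_preimage_Iic_ae_eq t))).trans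
    (lam01_Iic_symmDiff_Iic (fcdf_mem_Icc t) (fcdf_mem_Icc t))

/-- Layer-cake formula: `|x - y|` is the length of the set of `t` separating `x` and `y`. -/
lemma lintegral_ofReal_abs_sub_eq (π₀ : Measure (ℝ × ℝ)) [SFinite π₀] :
    ∫⁻ z, ENNReal.ofReal |z.1 - z.2| ∂π₀ = ∫⁻ t, π₀ ({z | z.1 ≤ t} ∆ {z | z.2 ≤ t}) := by
  set A : Set ((ℝ × ℝ) × ℝ) := {w | w.2 ∈ Ici w.1.1 ∆ Ici w.1.2}
  have hA : MeasurableSet A :=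
    (measurableSet_le (measurable_fst.comp measurable_fst) measurable_snd).symmDiff
      (measurableSet_le (measurable_snd.comp measurable_fst) measurable_snd)
  calc ∫⁻ z, ENNReal.ofReal |z.1 - z.2| ∂π₀ = ∫⁻ z, volume (Prod.mk z ⁻¹' A) ∂π₀ := by
        simp_rw [← volume_Ici_symmDiff_Ici]; rfl
    _ = (π₀.prod volume) A := (Measure.prod_apply hA).symm
    _ = ∫⁻ t, π₀ ({z | z.1 ≤ t} ∆ {z | z.2 ≤ t}) := Measure.prod_apply_symm hA

section Wasserstein

variable {p q : Measure ℝ}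

lemma wr_le_of_isCoupling {ρ : ℝ} {π₀ : Measure (ℝ × ℝ)} (h : IsCoupling π₀ p q) :
    Wr ρ p q ≤ ∫ z, |z.1 - z.2| ^ ρ ∂π₀ :=
  csInf_le ⟨0, by rintro _ ⟨_, -, rfl⟩; exact integral_nonneg fun _ => by positivity⟩ ⟨π₀, h, rfl⟩

lemma le_wr_of_forall_isCoupling [IsProbabilityMeasure p] [IsProbabilityMeasure q] {ρ c : ℝ}
    (h : ∀ π₀ : Measure (ℝ × ℝ), IsCoupling π₀ p q → c ≤ ∫ z, |z.1 - z.2| ^ ρ ∂π₀) :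
    c ≤ Wr ρ p q :=
  le_csInf ⟨_, _, isCoupling_prod p q, rfl⟩ fun _ ⟨π₀, hπ₀, hc⟩ => hc ▸ h π₀ hπ₀

lemma wr_nonneg (ρ : ℝ) (p q : Measure ℝ) : 0 ≤ Wr ρ p q :=
  Real.sInf_nonneg fun _ ⟨_, _, hc⟩ => hc ▸ integral_nonneg fun _ => by positivity

lemma integral_abs_sub_eq_toReal_lintegral (π₀ : Measure (ℝ × ℝ)) :
    ∫ z, |z.1 - z.2| ∂π₀ = (∫⁻ z, ENNReal.ofReal |z.1 - z.2| ∂π₀).toReal :=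
  integral_eq_lintegral_of_nonneg_ae (ae_of_all _ fun _ => abs_nonneg _) (by fun_prop)

lemma wr_one_eq_toReal_lintegral_abs_fcdf_sub [IsProbabilityMeasure p] [IsProbabilityMeasure q]
    (hp : Integrable (fun x => x) p) (hq : Integrable (fun x => x) q) :
    Wr 1 p q = (∫⁻ t, ENNReal.ofReal |Fcdf p t - Fcdf q t|).toReal := by
  refine le_antisymm ?_ (le_wr_of_forall_isCoupling fun π₀ hπ₀ => ?_)
  · refine (wr_le_of_isCoupling (isCoupling_quantileCoupling p q)).trans_eq ?_
    have := (isCoupling_quantileCoupling p q).isProbabilityMeasure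
    simp_rw [Real.rpow_one, integral_abs_sub_eq_toReal_lintegral, lintegral_ofReal_abs_sub_eq,
      quantileCoupling_symmDiff]
  · simp_rw [Real.rpow_one, integral_abs_sub_eq_toReal_lintegral]
    have := hπ₀.isProbabilityMeasure
    have hfin : ∫⁻ z, ENNReal.ofReal |z.1 - z.2| ∂π₀ ≠ ⊤ :=
      ((hπ₀.integrable_comp_fst hp).sub (hπ₀.integrable_comp_snd hq)).abs.lintegral_lt_top.ne
    rw [lintegral_ofReal_abs_sub_eq] at hfin ⊢
    exact ENNReal.toReal_mono hfin (lintegral_mono hπ₀.ofReal_abs_fcdf_sub_le)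

lemma abs_integral_sub_le_wr_one [IsProbabilityMeasure p] [IsProbabilityMeasure q]
    (hp : Integrable (fun x => x) p) (hq : Integrable (fun x => x) q) :
    |(∫ x, x ∂p) - ∫ y, y ∂q| ≤ Wr 1 p q := by
  refine le_wr_of_forall_isCoupling fun π₀ hπ₀ => ?_
  rw [← hπ₀.integral_comp_fst hp.1, ← hπ₀.integral_comp_snd hq.1,
    ← integral_sub (hπ₀.integrable_comp_fst hp) (hπ₀.integrable_comp_snd hq)]
  simp_rw [Real.rpow_one]
  exact abs_integral_le_integral_abs

lemma wr_one_le_integral_abs_add [IsProbabilityMeasure p] [IsProbabilityMeasure q]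
    (hp : Integrable (fun x => x) p) (hq : Integrable (fun x => x) q) :
    Wr 1 p q ≤ (∫ x, |x| ∂p) + ∫ y, |y| ∂q := by
  have h := isCoupling_prod p q
  refine (wr_le_of_isCoupling h).trans ?_
  rw [← h.integral_comp_fst (by fun_prop), ← h.integral_comp_snd (by fun_prop),
    ← integral_add (h.integrable_comp_fst hp.abs) (h.integrable_comp_snd hq.abs)]
  simp_rw [Real.rpow_one]
  exact integral_mono ((h.integrable_comp_fst hp).sub (h.integrable_comp_snd hq)).abs
    ((h.integrable_comp_fst hp.abs).add (h.integrable_comp_snd hq.abs)) fun z => abs_sub z.1 z.2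

end Wasserstein

section Kernel

variable {α : Type*} [MeasurableSpace α]

lemma measurable_fcdf_kernel (κ : Kernel α ℝ) [IsSFiniteKernel κ] :
    Measurable fun x : α × ℝ => Fcdf (κ x.1) x.2 :=
  ENNReal.measurable_toReal.comp <| Kernel.measurable_kernel_prodMk_left (κ := κ.prodMkRight ℝ)
    (measurableSet_le measurable_snd (measurable_snd.comp measurable_fst))

lemma aestronglyMeasurable_wr_one_kernel {β : Type*} [MeasurableSpace β] {χ : Measure (α × β)}
    {κ : Kernel α ℝ} {κ' : Kernel β ℝ} [IsMarkovKernel κ] [IsMarkovKernel κ']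
    (hκ : ∀ᵐ z ∂χ, Integrable (fun y => y) (κ z.1))
    (hκ' : ∀ᵐ z ∂χ, Integrable (fun y => y) (κ' z.2)) :
    AEStronglyMeasurable (fun z => Wr 1 (κ z.1) (κ' z.2)) χ := by
  have hF : Measurable fun w : (α × β) × ℝ => Fcdf (κ w.1.1) w.2 :=
    (measurable_fcdf_kernel κ).comp (measurable_fst.fst.prodMk measurable_snd)
  have hF' : Measurable fun w : (α × β) × ℝ => Fcdf (κ' w.1.2) w.2 :=
    (measurable_fcdf_kernel κ').comp (measurable_fst.snd.prodMk measurable_snd)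
  have hmeas : Measurable fun z : α × β =>
      (∫⁻ t, ENNReal.ofReal |Fcdf (κ z.1) t - Fcdf (κ' z.2) t|).toReal :=
    ENNReal.measurable_toReal.comp
      (ENNReal.measurable_ofReal.comp (hF.sub hF').abs).lintegral_prod_right'
  refine hmeas.aestronglyMeasurable.congr ?_
  filter_upwards [hκ, hκ'] with z h h'
  exact (wr_one_eq_toReal_lintegral_abs_fcdf_sub h h').symm

lemma ProbabilityTheory.Kernel.ae_eq_of_compProd_eq_of_isSFiniteKernel {μ : Measure α}
    [SigmaFinite μ] {κ η : Kernel α ℝ} [IsSFiniteKernel κ] [IsFiniteKernel η]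
    (h : μ ⊗ₘ κ = μ ⊗ₘ η) : κ =ᵐ[μ] η := by
  have hset : ∀ s, MeasurableSet s → ∀ᵐ x ∂μ, κ x s = η x s := fun s hs =>
    ae_eq_of_forall_setLIntegral_eq_of_sigmaFinite (κ.measurable_coe hs) (η.measurable_coe hs)
      fun t ht _ => by
        rw [← Measure.compProd_apply_prod ht hs, h, Measure.compProd_apply_prod ht hs]
  filter_upwards [hset univ .univ, ae_all_iff.2 fun r : ℚ => hset (Iic (r : ℝ)) measurableSet_Iic]
    with x huniv hIic
  refine (ext_of_generate_finite _
    (BorelSpace.measurable_eq.trans Real.borel_eq_generateFrom_Iic_rat) Real.isPiSystem_Iic_rat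
    ?_ huniv.symm).symm
  simp only [mem_iUnion, mem_singleton_iff]
  rintro _ ⟨r, rfl⟩
  exact (hIic r).symm

lemma ProbabilityTheory.Kernel.isSFiniteKernel_of_compProd_eq {β : Type*} [MeasurableSpace β]
    {μ : Measure α} {κ η : Kernel α β} (h : μ ⊗ₘ κ = μ ⊗ₘ η) (hη : μ ⊗ₘ η ≠ 0) :
    IsSFiniteKernel κ := by
  by_contra hκ
  exact hη (h ▸ Measure.compProd_of_not_isSFiniteKernel μ κ hκ)

end Kernel

section MartingaleLowerBound

variable {μ μ' : Measure ℝ} [SFinite μ] [SFinite μ'] {κ κ' : Kernel ℝ ℝ} [IsMarkovKernel κ]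
  [IsMarkovKernel κ'] {χ : Measure (ℝ × ℝ)}

lemma integrable_wr_one_kernel (hκ : Integrable (fun z : ℝ × ℝ => z.2) (μ ⊗ₘ κ))
    (hκ' : Integrable (fun z : ℝ × ℝ => z.2) (μ' ⊗ₘ κ')) (hχ : IsCoupling χ μ μ') :
    Integrable (fun z => Wr 1 (κ z.1) (κ' z.2)) χ := by
  have hae : ∀ᵐ z ∂χ, Integrable (fun y => y) (κ z.1) := hχ.ae_comp_fst hκ.ae_of_compProd
  have hae' : ∀ᵐ z ∂χ, Integrable (fun y => y) (κ' z.2) := hχ.ae_comp_snd hκ'.ae_of_compProd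
  refine Integrable.mono' ((hχ.integrable_comp_fst hκ.integral_norm_compProd).add
      (hχ.integrable_comp_snd hκ'.integral_norm_compProd))
    (aestronglyMeasurable_wr_one_kernel hae hae') ?_
  filter_upwards [hae, hae'] with z h h'
  rw [Real.norm_of_nonneg (wr_nonneg _ _ _)]
  exact wr_one_le_integral_abs_add h h'

theorem integral_abs_integral_sub_le (hμ : Integrable (fun x => x) μ)
    (hμ' : Integrable (fun x => x) μ') (hκ : Integrable (fun z : ℝ × ℝ => z.2) (μ ⊗ₘ κ))
    (hκ' : Integrable (fun z : ℝ × ℝ => z.2) (μ' ⊗ₘ κ'))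
    (hmart : ∀ᵐ x ∂μ', ∫ y, y ∂κ' x = x) (hχ : IsCoupling χ μ μ') :
    ∫ x, |(∫ y, y ∂κ x) - x| ∂μ ≤ ∫ z, (|z.1 - z.2| + Wr 1 (κ z.1) (κ' z.2)) ∂χ := by
  have hm : Integrable (fun x => |(∫ y, y ∂κ x) - x|) μ := (hκ.integral_compProd.sub hμ).abs
  have hbound : ∀ᵐ z ∂χ, |(∫ y, y ∂κ z.1) - z.1| ≤ |z.1 - z.2| + Wr 1 (κ z.1) (κ' z.2) := by
    have hae : ∀ᵐ x ∂μ, Integrable (fun y => y) (κ x) := hκ.ae_of_compProd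
    have hae' : ∀ᵐ x ∂μ', Integrable (fun y => y) (κ' x) := hκ'.ae_of_compProd
    filter_upwards [hχ.ae_comp_fst hae, hχ.ae_comp_snd (hae'.and hmart)] with z h ⟨h', hz⟩
    have := abs_integral_sub_le_wr_one h h'
    rw [hz] at this
    calc |(∫ y, y ∂κ z.1) - z.1| ≤ |(∫ y, y ∂κ z.1) - z.2| + |z.2 - z.1| := abs_sub_le _ _ _
      _ ≤ _ := by rw [abs_sub_comm z.2]; linarith
  rw [← hχ.integral_comp_fst hm.1]
  exact integral_mono_ae (hχ.integrable_comp_fst hm)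
    (((hχ.integrable_comp_fst hμ).sub (hχ.integrable_comp_snd hμ')).abs.add
      (integrable_wr_one_kernel hκ hκ' hχ)) hbound

end MartingaleLowerBound

theorem stmt0_general
    (μ ν : Measure ℝ) [IsProbabilityMeasure μ]
    (hμ1 : Integrable (fun x => |x|) μ) (hν1 : Integrable (fun x => |x|) ν)
    (κ : Kernel ℝ ℝ) [IsMarkovKernel κ]
    (π : Measure (ℝ × ℝ)) (hπd : π = μ.compProd κ) (hπ : IsCoupling π μ ν)
    (κM : Kernel ℝ ℝ) [IsMarkovKernel κM]
    (M : Measure (ℝ × ℝ)) (hMd : M = μ.compProd κM) (hM : IsCoupling M μ ν)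
    (hmart : ∀ᵐ x ∂μ, (∫ y, y ∂(κM x)) = x) :
    ∫ x, |(∫ y, y ∂(κ x)) - x| ∂μ ≤ AWr 1 π M := by
  have hμ : Integrable (fun x => x) μ := (integrable_norm_iff aestronglyMeasurable_id).1 hμ1
  have hν : Integrable (fun y => y) ν := (integrable_norm_iff aestronglyMeasurable_id).1 hν1
  have hκ : Integrable (fun z : ℝ × ℝ => z.2) (μ ⊗ₘ κ) := hπd ▸ hπ.integrable_comp_snd hν
  have hκM : Integrable (fun z : ℝ × ℝ => z.2) (μ ⊗ₘ κM) := hMd ▸ hM.integrable_comp_snd hν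
  rw [AWr, hπ.1, hM.1]
  refine le_csInf ⟨_, _, κ, κM, isCoupling_map_diag μ, hπd, hMd, rfl⟩ ?_
  rintro _ ⟨χ, κ₁, κ₁', hχ, hπ₁, hM₁, rfl⟩
  have := Kernel.isSFiniteKernel_of_compProd_eq (hπ₁.symm.trans hπd) (NeZero.ne _)
  have := Kernel.isSFiniteKernel_of_compProd_eq (hM₁.symm.trans hMd) (NeZero.ne _)
  have h₁ := Kernel.ae_eq_of_compProd_eq_of_isSFiniteKernel (hπ₁.symm.trans hπd)
  have h₂ := Kernel.ae_eq_of_compProd_eq_of_isSFiniteKernel (hM₁.symm.trans hMd)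
  calc ∫ x, |(∫ y, y ∂κ x) - x| ∂μ ≤ ∫ z, (|z.1 - z.2| + Wr 1 (κ z.1) (κM z.2)) ∂χ :=
        integral_abs_integral_sub_le hμ hμ hκ hκM hmart hχ
    _ = _ := integral_congr_ae <| by
        filter_upwards [hχ.ae_comp_fst h₁, hχ.ae_comp_snd h₂] with z h h'
        rw [h, h', Real.rpow_one]

/-- Wiesel's lower bound, \cite[Lemma 2.1]{Wi20}: for `μ ≤_cx ν` and any
coupling `π = μ ⊗ κ` between `μ` and `ν`, the adapted Wasserstein distance `AW₁(π, M)` to any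
martingale coupling `M` between `μ` and `ν` is bounded below by
`∫ |∫ y π_x(dy) - x| μ(dx)`; hence so is the infimum over all martingale couplings. -/
theorem stmt0
    (μ ν : Measure ℝ) [IsProbabilityMeasure μ] [IsProbabilityMeasure ν]
    (hμ1 : Integrable (fun x => |x|) μ) (hν1 : Integrable (fun x => |x|) ν)
    (hcx : ConvexOrder μ ν)
    (κ : Kernel ℝ ℝ) [IsMarkovKernel κ]
    (π : Measure (ℝ × ℝ)) (hπd : π = μ.compProd κ) (hπ : IsCoupling π μ ν)
    (κM : Kernel ℝ ℝ) [IsMarkovKernel κM]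
    (M : Measure (ℝ × ℝ)) (hMd : M = μ.compProd κM) (hM : IsCoupling M μ ν)
    (hmart : ∀ᵐ x ∂μ, (∫ y, y ∂(κM x)) = x) :
    ∫ x, |(∫ y, y ∂(κ x)) - x| ∂μ ≤ AWr 1 π M :=
  stmt0_general μ ν hμ1 hν1 κ π hπd hπ κM M hMd hM hmart
end

section
/- Let d ≥ 1 and let μ, ν be probability measures on ℝ^d with finite second moment such that μ ≤_cx ν. Let π ∈ Π(μ,ν) be optimal for W₂(μ,ν) and concentrated on the graph of a measurable map T : ℝ^d → ℝ^d (i.e. π is the image of μ by x ↦ (x, T(x))). Then for every martingale coupling M ∈ Π^M(μ,ν), AW₂²(M, π) = W₂²(μ,ν) + ∫_{ℝ^d} |y|² ν(dy) − ∫_{ℝ^d} |x|² μ(dx); in particular every M ∈ Π^M(μ,ν) is an AW₂-minimal martingale rearrangement coupling of π. -/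
open MeasureTheory ProbabilityTheory Set Filter

noncomputable section

variable (d : ℕ)

/-- `π` is a coupling between measures `μ` and `ν` on `ℝ^d`. -/
def IsCouplingE (π : Measure (EuclideanSpace ℝ (Fin d) × EuclideanSpace ℝ (Fin d)))
    (μ ν : Measure (EuclideanSpace ℝ (Fin d))) : Prop :=
  π.map Prod.fst = μ ∧ π.map Prod.snd = ν

/-- `W_ρ^ρ` on `ℝ^d` with the Euclidean norm. -/
def WrE (ρ : ℝ) (η η' : Measure (EuclideanSpace ℝ (Fin d))) : ℝ :=
  sInf {c | ∃ π, IsCouplingE d π η η' ∧ c = ∫ p, ‖p.1 - p.2‖ ^ ρ ∂π}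

/-- The convex order on measures on `ℝ^d`. -/
def ConvexOrderE (μ ν : Measure (EuclideanSpace ℝ (Fin d))) : Prop :=
  ∀ f : EuclideanSpace ℝ (Fin d) → ℝ, ConvexOn ℝ Set.univ f →
    Integrable f μ → Integrable f ν → ∫ x, f x ∂μ ≤ ∫ x, f x ∂ν

/-- `AW_ρ^ρ` on couplings of measures on `ℝ^d`. -/
def AWrE (ρ : ℝ)
    (π π' : Measure (EuclideanSpace ℝ (Fin d) × EuclideanSpace ℝ (Fin d))) : ℝ :=
  sInf {c | ∃ (χ : Measure (EuclideanSpace ℝ (Fin d) × EuclideanSpace ℝ (Fin d)))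
      (κ κ' : Kernel (EuclideanSpace ℝ (Fin d)) (EuclideanSpace ℝ (Fin d))),
      IsCouplingE d χ (π.map Prod.fst) (π'.map Prod.fst) ∧
      π = (π.map Prod.fst).compProd κ ∧ π' = (π'.map Prod.fst).compProd κ' ∧
      c = ∫ q, (‖q.1 - q.2‖ ^ ρ + WrE d ρ (κ q.1) (κ' q.2)) ∂χ}

end

/-! For a martingale kernel `M_x` with barycentre `x`, the bias–variance identity gives
`W₂²(M_x, δ_a) = ∫ |y|² dM_x + |x - a|² - |x|²`. The kernel of `π` is `δ_{T x'}`, so for every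
coupling `χ` of `μ` with itself the adapted cost equals
`∫ |x - x'|² dχ + ∫ |x - T x'|² dχ + ∫ |y|² dν - ∫ |x|² dμ`. The first term is nonnegative and the
second is at least `W₂²(μ, ν)`, because `(x, T x')` under `χ` couples `μ` and `ν`; the identity
coupling attains both bounds by optimality of `π`. The resulting value does not depend on `M`. -/

namespace ProbabilityTheory.Kernel

variable {α β : Type*} {mα : MeasurableSpace α} {mβ : MeasurableSpace β}
  [MeasurableSpace.CountableOrCountablyGenerated α β] {μ : Measure α} {κ η : Kernel α β}

lemma ae_eq_of_compProd_eq_of_isSFiniteKernel_s11 [IsFiniteMeasure μ] [IsSFiniteKernel κ]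
    [IsFiniteKernel η] (h : μ ⊗ₘ κ = μ ⊗ₘ η) : κ =ᵐ[μ] η := by
  have hmass : (fun a => κ a univ) =ᵐ[μ] fun a => η a univ := by
    refine ae_eq_of_forall_setLIntegral_eq_of_sigmaFinite (κ.measurable_coe .univ)
      (η.measurable_coe .univ) fun s hs _ => ?_
    rw [← Measure.compProd_apply_prod hs .univ, ← Measure.compProd_apply_prod hs .univ, h]
  -- `κ` need not be finite: replace it by `η` off the full-measure set where their masses agree.
  have hA : MeasurableSet {a | κ a univ = η a univ} :=
    measurableSet_eq_fun (κ.measurable_coe .univ) (η.measurable_coe .univ)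
  let κ' := piecewise hA κ η
  have : IsFiniteKernel κ' := ⟨⟨η.bound, η.bound_lt_top, fun a => by
    simp only [κ', piecewise_apply]
    split_ifs with ha
    · exact ha.trans_le (measure_le_bound η a univ)
    · exact measure_le_bound η a univ⟩⟩
  have hκκ' : κ =ᵐ[μ] κ' := by
    filter_upwards [hmass] with a ha
    simp only [κ', piecewise_apply, Set.mem_ofPred_eq, ha, if_true]
  exact hκκ'.trans (ae_eq_of_compProd_eq ((Measure.compProd_congr hκκ').symm.trans h))

lemma ae_eq_of_compProd_eq_of_isMarkovKernel [IsProbabilityMeasure μ] [IsMarkovKernel η]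
    (h : μ ⊗ₘ κ = μ ⊗ₘ η) : κ =ᵐ[μ] η := by
  have : IsSFiniteKernel κ := by
    by_contra hκ
    rw [Measure.compProd_of_not_isSFiniteKernel _ _ hκ] at h
    simpa using congr_arg (· univ) h
  exact ae_eq_of_compProd_eq_of_isSFiniteKernel_s11 h

end ProbabilityTheory.Kernel

section SecondMoment

variable {α : Type*} {mα : MeasurableSpace α} {μ : Measure α}
  {E : Type*} [NormedAddCommGroup E] [MeasurableSpace E] [BorelSpace E] [SecondCountableTopology E]

lemma memLp_two_of_integrable_sq_norm {f : α → E} (hf : Measurable f)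
    (h2 : Integrable (fun x => ‖f x‖ ^ 2) μ) : MemLp f 2 μ :=
  (memLp_two_iff_integrable_sq_norm hf.aestronglyMeasurable).2 h2

lemma integrable_sq_norm_sub {f g : α → E} (hf : Measurable f) (hg : Measurable g)
    (hf2 : Integrable (fun x => ‖f x‖ ^ 2) μ) (hg2 : Integrable (fun x => ‖g x‖ ^ 2) μ) :
    Integrable (fun x => ‖f x - g x‖ ^ 2) μ :=
  (memLp_two_iff_integrable_sq_norm (hf.sub hg).aestronglyMeasurable).1
    ((memLp_two_of_integrable_sq_norm hf hf2).sub (memLp_two_of_integrable_sq_norm hg hg2))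

variable [InnerProductSpace ℝ E] [CompleteSpace E]

lemma integral_norm_sub_sq {η : Measure E} [IsProbabilityMeasure η]
    (h2 : Integrable (fun y => ‖y‖ ^ 2) η) (a : E) :
    ∫ y, ‖y - a‖ ^ 2 ∂η = ∫ y, ‖y‖ ^ 2 ∂η + ‖(∫ y, y ∂η) - a‖ ^ 2 - ‖∫ y, y ∂η‖ ^ 2 := by
  have hid : Integrable (fun y : E => y) η :=
    (memLp_two_of_integrable_sq_norm measurable_id h2).integrable one_le_two
  have hinner : Integrable (fun y => 2 * inner ℝ a y) η := (hid.const_inner a).const_mul 2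
  have hexpand : ∀ y : E, ‖y - a‖ ^ 2 = ‖y‖ ^ 2 - 2 * inner ℝ a y + ‖a‖ ^ 2 := fun y => by
    rw [norm_sub_sq_real, real_inner_comm]
  simp_rw [hexpand]
  rw [integral_add (f := fun y => ‖y‖ ^ 2 - 2 * inner ℝ a y) (h2.sub hinner)
    (integrable_const _), integral_sub h2 hinner, integral_const_mul, integral_inner hid,
    integral_const, probReal_univ, one_smul]
  ring

end SecondMoment

namespace MeasureTheory.Measure

variable {α β E : Type*} {mα : MeasurableSpace α} {mβ : MeasurableSpace β}
  [NormedAddCommGroup E] {μ : Measure α} {κ : Kernel α β} {ν : Measure β}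
  {f : β → E}

lemma integrable_snd_of_map_snd_compProd (hν : (μ ⊗ₘ κ).map Prod.snd = ν) (hf : Integrable f ν) :
    Integrable (fun p => f p.2) (μ ⊗ₘ κ) := by
  rw [← hν] at hf
  exact hf.comp_measurable measurable_snd

variable [SFinite μ] [IsSFiniteKernel κ]

lemma ae_integrable_of_map_snd_compProd (hν : (μ ⊗ₘ κ).map Prod.snd = ν)
    (hf : Integrable f ν) : ∀ᵐ x ∂μ, Integrable f (κ x) :=
  ((integrable_compProd_iff (integrable_snd_of_map_snd_compProd hν hf).1).1
    (integrable_snd_of_map_snd_compProd hν hf)).1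

variable [NormedSpace ℝ E]

lemma integrable_integral_of_map_snd_compProd (hν : (μ ⊗ₘ κ).map Prod.snd = ν)
    (hf : Integrable f ν) : Integrable (fun x => ∫ y, f y ∂κ x) μ :=
  (integrable_snd_of_map_snd_compProd hν hf).integral_compProd

lemma integral_integral_of_map_snd_compProd (hν : (μ ⊗ₘ κ).map Prod.snd = ν)
    (hf : Integrable f ν) : ∫ x, ∫ y, f y ∂κ x ∂μ = ∫ y, f y ∂ν := by
  rw [← integral_compProd (integrable_snd_of_map_snd_compProd hν hf), ← hν,
    integral_map measurable_snd.aemeasurable (hν ▸ hf).1]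

end MeasureTheory.Measure

section Wasserstein

variable {d : ℕ}

local notation "ℝᵈ" => EuclideanSpace ℝ (Fin d)

lemma isCouplingE_map_graph (μ : Measure ℝᵈ) {T : ℝᵈ → ℝᵈ} (hT : Measurable T) :
    IsCouplingE d (μ.map fun x => (x, T x)) μ (μ.map T) := by
  have hg : Measurable fun x => (x, T x) := measurable_id.prodMk hT
  exact ⟨by rw [Measure.map_map measurable_fst hg]; exact Measure.map_id,
    by rw [Measure.map_map measurable_snd hg]; rfl⟩

lemma IsCouplingE.map_snd {χ : Measure (ℝᵈ × ℝᵈ)} {μ μ' : Measure ℝᵈ}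
    (hχ : IsCouplingE d χ μ μ') {T : ℝᵈ → ℝᵈ} (hT : Measurable T) :
    IsCouplingE d (χ.map fun q => (q.1, T q.2)) μ (μ'.map T) := by
  have hg : Measurable fun q : ℝᵈ × ℝᵈ => (q.1, T q.2) :=
    measurable_fst.prodMk (hT.comp measurable_snd)
  exact ⟨by rw [Measure.map_map measurable_fst hg]; exact hχ.1,
    by rw [Measure.map_map measurable_snd hg, ← hχ.2, Measure.map_map hT measurable_snd]; rfl⟩

lemma WrE_le_integral {ρ : ℝ} {η η' : Measure ℝᵈ} {π : Measure (ℝᵈ × ℝᵈ)}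
    (hπ : IsCouplingE d π η η') : WrE d ρ η η' ≤ ∫ p, ‖p.1 - p.2‖ ^ ρ ∂π := by
  refine csInf_le ⟨0, ?_⟩ ⟨π, hπ, rfl⟩
  rintro c ⟨π', -, rfl⟩
  exact integral_nonneg fun p => Real.rpow_nonneg (norm_nonneg _) ρ

lemma WrE_dirac_right (ρ : ℝ) (η : Measure ℝᵈ) [IsProbabilityMeasure η] (a : ℝᵈ) :
    WrE d ρ η (Measure.dirac a) = ∫ y, ‖y - a‖ ^ ρ ∂η := by
  have hcost : ∀ π, IsCouplingE d π η (Measure.dirac a) →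
      ∫ p, ‖p.1 - p.2‖ ^ ρ ∂π = ∫ y, ‖y - a‖ ^ ρ ∂η := by
    intro π hπ
    have hsnd : ∀ᵐ p ∂π, p.2 = a := by
      refine ae_of_ae_map (p := fun y => y = a) measurable_snd.aemeasurable ?_
      rw [hπ.2, ae_dirac_eq]
      exact rfl
    rw [integral_congr_ae (hsnd.mono fun p hp => by rw [hp]), ← hπ.1,
      integral_map (f := fun y => ‖y - a‖ ^ ρ) measurable_fst.aemeasurable
        ((measurable_id.sub_const a).norm.pow_const ρ).aestronglyMeasurable]
  have hcoupling : IsCouplingE d (η.map fun y => (y, a)) η (Measure.dirac a) := by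
    simpa using isCouplingE_map_graph η (measurable_const (a := a))
  have hset : {c | ∃ π, IsCouplingE d π η (Measure.dirac a) ∧ c = ∫ p, ‖p.1 - p.2‖ ^ ρ ∂π}
      = {∫ y, ‖y - a‖ ^ ρ ∂η} := by
    ext c
    constructor
    · rintro ⟨π, hπ, rfl⟩
      exact hcost π hπ
    · rintro rfl
      exact ⟨_, hcoupling, (hcost _ hcoupling).symm⟩
  rw [WrE, hset, csInf_singleton]

lemma ae_WrE_dirac_eq_of_martingale {μ : Measure ℝᵈ} {κ : Kernel ℝᵈ ℝᵈ} [IsMarkovKernel κ]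
    (h2 : ∀ᵐ x ∂μ, Integrable (fun y => ‖y‖ ^ 2) (κ x)) (hmart : ∀ᵐ x ∂μ, ∫ y, y ∂κ x = x) :
    ∀ᵐ x ∂μ, ∀ a, WrE d 2 (κ x) (Measure.dirac a) = ∫ y, ‖y‖ ^ 2 ∂κ x + ‖x - a‖ ^ 2 - ‖x‖ ^ 2 := by
  filter_upwards [h2, hmart] with x hx2 hxmart a
  simp_rw [WrE_dirac_right, Real.rpow_two, integral_norm_sub_sq hx2, hxmart]

variable {μ ν : Measure (EuclideanSpace ℝ (Fin d))}
  {T : EuclideanSpace ℝ (Fin d) → EuclideanSpace ℝ (Fin d)}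
  {κM : Kernel (EuclideanSpace ℝ (Fin d)) (EuclideanSpace ℝ (Fin d))} [IsMarkovKernel κM]

lemma integral_adaptedCost_eq [SFinite μ] (hμ2 : Integrable (fun x => ‖x‖ ^ 2) μ)
    (hν2 : Integrable (fun y => ‖y‖ ^ 2) ν) (hT : Measurable T) (hTν : μ.map T = ν)
    (hMν : (μ ⊗ₘ κM).map Prod.snd = ν) (hmart : ∀ᵐ x ∂μ, ∫ y, y ∂κM x = x)
    {χ : Measure (ℝᵈ × ℝᵈ)} (hχ : IsCouplingE d χ μ μ) {κ κ' : Kernel ℝᵈ ℝᵈ}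
    (hκ : κ =ᵐ[μ] κM) (hκ' : ∀ᵐ x ∂μ, κ' x = Measure.dirac (T x)) :
    ∫ q, (‖q.1 - q.2‖ ^ (2 : ℝ) + WrE d 2 (κ q.1) (κ' q.2)) ∂χ
      = ∫ q, ‖q.1 - q.2‖ ^ 2 ∂χ + ∫ q, ‖q.1 - T q.2‖ ^ 2 ∂χ
        + (∫ y, ‖y‖ ^ 2 ∂ν - ∫ x, ‖x‖ ^ 2 ∂μ) := by
  have hfst : ∀ {p : ℝᵈ → Prop}, (∀ᵐ x ∂μ, p x) → ∀ᵐ q ∂χ, p q.1 := fun h =>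
    ae_of_ae_map measurable_fst.aemeasurable (by rwa [hχ.1])
  have hsnd : ∀ {p : ℝᵈ → Prop}, (∀ᵐ x ∂μ, p x) → ∀ᵐ q ∂χ, p q.2 := fun h =>
    ae_of_ae_map measurable_snd.aemeasurable (by rwa [hχ.2])
  have hfst_int : ∀ {g : ℝᵈ → ℝ}, Integrable g μ → Integrable (fun q => g q.1) χ := fun h =>
    (by rwa [hχ.1] : Integrable _ (χ.map Prod.fst)).comp_measurable measurable_fst
  have hsnd_int : ∀ {g : ℝᵈ → ℝ}, Integrable g μ → Integrable (fun q => g q.2) χ := fun h =>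
    (by rwa [hχ.2] : Integrable _ (χ.map Prod.snd)).comp_measurable measurable_snd
  have hfst_integral : ∀ {g : ℝᵈ → ℝ}, Integrable g μ → ∫ q, g q.1 ∂χ = ∫ x, g x ∂μ := fun h => by
    rw [← integral_map measurable_fst.aemeasurable (by rw [hχ.1]; exact h.1), hχ.1]
  have hT2 : Integrable (fun x => ‖T x‖ ^ 2) μ := by
    rw [← hTν] at hν2
    exact hν2.comp_measurable hT
  have hκM2 := Measure.ae_integrable_of_map_snd_compProd hMν hν2
  have hmoment := Measure.integrable_integral_of_map_snd_compProd hMν hν2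
  have hdiff : Integrable (fun q : ℝᵈ × ℝᵈ => ‖q.1 - q.2‖ ^ 2) χ :=
    integrable_sq_norm_sub measurable_fst measurable_snd (hfst_int hμ2) (hsnd_int hμ2)
  have hdiffT : Integrable (fun q : ℝᵈ × ℝᵈ => ‖q.1 - T q.2‖ ^ 2) χ :=
    integrable_sq_norm_sub measurable_fst (hT.comp measurable_snd) (hfst_int hμ2) (hsnd_int hT2)
  have hpointwise : (fun q : ℝᵈ × ℝᵈ => ‖q.1 - q.2‖ ^ (2 : ℝ) + WrE d 2 (κ q.1) (κ' q.2))
      =ᵐ[χ] fun q => ‖q.1 - q.2‖ ^ 2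
        + (∫ y, ‖y‖ ^ 2 ∂κM q.1 + ‖q.1 - T q.2‖ ^ 2 - ‖q.1‖ ^ 2) := by
    filter_upwards [hfst hκ, hsnd hκ', hfst (ae_WrE_dirac_eq_of_martingale hκM2 hmart)]
      with q hκq hκ'q hWq
    rw [Real.rpow_two, hκq, hκ'q, hWq]
  have hsum : Integrable (fun q : ℝᵈ × ℝᵈ => ∫ y, ‖y‖ ^ 2 ∂κM q.1 + ‖q.1 - T q.2‖ ^ 2) χ :=
    (hfst_int hmoment).add hdiffT
  have hrest : Integrable
      (fun q : ℝᵈ × ℝᵈ => ∫ y, ‖y‖ ^ 2 ∂κM q.1 + ‖q.1 - T q.2‖ ^ 2 - ‖q.1‖ ^ 2) χ :=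
    hsum.sub (hfst_int hμ2)
  rw [integral_congr_ae hpointwise, integral_add hdiff hrest, integral_sub hsum (hfst_int hμ2),
    integral_add (hfst_int hmoment) hdiffT, hfst_integral hmoment, hfst_integral hμ2,
    Measure.integral_integral_of_map_snd_compProd hMν hν2]
  ring

lemma AWrE_compProd_graph_eq [IsProbabilityMeasure μ] (hμ2 : Integrable (fun x => ‖x‖ ^ 2) μ)
    (hν2 : Integrable (fun y => ‖y‖ ^ 2) ν) (hT : Measurable T) {π : Measure (ℝᵈ × ℝᵈ)}
    (hπd : π = μ.map (fun x => (x, T x))) (hπ : IsCouplingE d π μ ν)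
    (hopt : ∫ p, ‖p.1 - p.2‖ ^ (2 : ℝ) ∂π = WrE d 2 μ ν)
    (hM : IsCouplingE d (μ ⊗ₘ κM) μ ν) (hmart : ∀ᵐ x ∂μ, ∫ y, y ∂κM x = x) :
    AWrE d 2 (μ ⊗ₘ κM) π = WrE d 2 μ ν + ∫ y, ‖y‖ ^ 2 ∂ν - ∫ x, ‖x‖ ^ 2 ∂μ := by
  have hTν : μ.map T = ν := (isCouplingE_map_graph μ hT).2.symm.trans (hπd ▸ hπ.2)
  have hπκ : π = μ ⊗ₘ Kernel.deterministic T hT := by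
    rw [Measure.compProd_deterministic, hπd]
  have hW : WrE d 2 μ ν = ∫ x, ‖x - T x‖ ^ 2 ∂μ := by
    have hgraph : Measurable fun x => (x, T x) := measurable_id.prodMk hT
    simp_rw [← hopt, hπd, Real.rpow_two]
    rw [integral_map hgraph.aemeasurable (by fun_prop)]
  have hcost := fun {χ} (hχ : IsCouplingE d χ μ μ) {κ κ'} =>
    integral_adaptedCost_eq (κ := κ) (κ' := κ') hμ2 hν2 hT hTν hM.2 hmart hχ
  rw [AWrE, hM.1, hπ.1]
  refine IsLeast.csInf_eq ⟨?_, ?_⟩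
  · have hdiag := isCouplingE_map_graph μ measurable_id
    have hid : Measurable fun x : ℝᵈ => (x, id x) := measurable_id.prodMk measurable_id
    rw [Measure.map_id] at hdiag
    refine ⟨_, κM, Kernel.deterministic T hT, hdiag, rfl, hπκ, ?_⟩
    rw [hcost hdiag ae_eq_rfl (ae_of_all _ fun x => Kernel.deterministic_apply hT x),
      integral_map hid.aemeasurable (by fun_prop), integral_map hid.aemeasurable (by fun_prop), hW]
    simp only [id_eq, sub_self, norm_zero, zero_pow two_ne_zero, integral_zero, zero_add]
    ring
  · rintro c ⟨χ, κ, κ', hχ, hMκ, hπκ', rfl⟩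
    have hκ' : ∀ᵐ x ∂μ, κ' x = Measure.dirac (T x) := by
      filter_upwards [Kernel.ae_eq_of_compProd_eq_of_isMarkovKernel (hπκ'.symm.trans hπκ)]
        with x hx
      rw [hx, Kernel.deterministic_apply]
    rw [hcost hχ (Kernel.ae_eq_of_compProd_eq_of_isMarkovKernel hMκ.symm) hκ']
    have hWχ : WrE d 2 μ ν ≤ ∫ q, ‖q.1 - T q.2‖ ^ 2 ∂χ := by
      have hg : Measurable fun q : ℝᵈ × ℝᵈ => (q.1, T q.2) :=
        measurable_fst.prodMk (hT.comp measurable_snd)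
      have := WrE_le_integral (ρ := 2) (hχ.map_snd hT)
      simp_rw [hTν, Real.rpow_two] at this
      rwa [integral_map hg.aemeasurable (by fun_prop)] at this
    have hχ_nonneg : 0 ≤ ∫ q, ‖q.1 - q.2‖ ^ 2 ∂χ := integral_nonneg fun q => by positivity
    linarith

end Wasserstein

theorem stmt11_general (d : ℕ)
    (μ ν : Measure (EuclideanSpace ℝ (Fin d)))
    [IsProbabilityMeasure μ]
    (hμ2 : Integrable (fun x => ‖x‖ ^ 2) μ) (hν2 : Integrable (fun y => ‖y‖ ^ 2) ν)
    (T : EuclideanSpace ℝ (Fin d) → EuclideanSpace ℝ (Fin d)) (hT : Measurable T)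
    (π : Measure (EuclideanSpace ℝ (Fin d) × EuclideanSpace ℝ (Fin d)))
    (hπd : π = μ.map (fun x => (x, T x))) (hπ : IsCouplingE d π μ ν)
    (hopt : (∫ p, ‖p.1 - p.2‖ ^ (2 : ℝ) ∂π) = WrE d 2 μ ν)
    (κM : Kernel (EuclideanSpace ℝ (Fin d)) (EuclideanSpace ℝ (Fin d))) [IsMarkovKernel κM]
    (M : Measure (EuclideanSpace ℝ (Fin d) × EuclideanSpace ℝ (Fin d)))
    (hMd : M = μ.compProd κM) (hM : IsCouplingE d M μ ν)
    (hmart : ∀ᵐ x ∂μ, (∫ y, y ∂(κM x)) = x) :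
    AWrE d 2 M π = WrE d 2 μ ν + (∫ y, ‖y‖ ^ 2 ∂ν) - ∫ x, ‖x‖ ^ 2 ∂μ ∧
    (∀ (κ' : Kernel (EuclideanSpace ℝ (Fin d)) (EuclideanSpace ℝ (Fin d))),
      IsMarkovKernel κ' → IsCouplingE d (μ.compProd κ') μ ν →
      (∀ᵐ x ∂μ, (∫ y, y ∂(κ' x)) = x) →
      AWrE d 2 M π ≤ AWrE d 2 (μ.compProd κ') π) := by
  subst hMd
  have hAW := AWrE_compProd_graph_eq hμ2 hν2 hT hπd hπ hopt hM hmart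
  refine ⟨hAW, fun κ' _ hM' hmart' => ?_⟩
  rw [hAW, AWrE_compProd_graph_eq hμ2 hν2 hT hπd hπ hopt hM' hmart']

/-- Proposition `QuadraticMarReag`: for `μ ≤_cx ν` on `ℝ^d` with finite second
moments and `π ∈ Π(μ,ν)` optimal for `W₂(μ,ν)` and concentrated on the graph of a measurable map
`T`, every martingale coupling `M` between `μ` and `ν` satisfies
`AW₂²(M, π) = W₂²(μ,ν) + ∫ |y|² ν(dy) - ∫ |x|² μ(dx)`; in particular every `M ∈ Π^M(μ,ν)` is an
`AW₂`-minimal martingale rearrangement coupling of `π`. -/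
theorem stmt11 (d : ℕ) (hd : 1 ≤ d)
    (μ ν : Measure (EuclideanSpace ℝ (Fin d)))
    [IsProbabilityMeasure μ] [IsProbabilityMeasure ν]
    (hμ2 : Integrable (fun x => ‖x‖ ^ 2) μ) (hν2 : Integrable (fun y => ‖y‖ ^ 2) ν)
    (hcx : ConvexOrderE d μ ν)
    (T : EuclideanSpace ℝ (Fin d) → EuclideanSpace ℝ (Fin d)) (hT : Measurable T)
    (π : Measure (EuclideanSpace ℝ (Fin d) × EuclideanSpace ℝ (Fin d)))
    (hπd : π = μ.map (fun x => (x, T x))) (hπ : IsCouplingE d π μ ν)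
    (hopt : (∫ p, ‖p.1 - p.2‖ ^ (2 : ℝ) ∂π) = WrE d 2 μ ν)
    (κM : Kernel (EuclideanSpace ℝ (Fin d)) (EuclideanSpace ℝ (Fin d))) [IsMarkovKernel κM]
    (M : Measure (EuclideanSpace ℝ (Fin d) × EuclideanSpace ℝ (Fin d)))
    (hMd : M = μ.compProd κM) (hM : IsCouplingE d M μ ν)
    (hmart : ∀ᵐ x ∂μ, (∫ y, y ∂(κM x)) = x) :
    AWrE d 2 M π = WrE d 2 μ ν + (∫ y, ‖y‖ ^ 2 ∂ν) - ∫ x, ‖x‖ ^ 2 ∂μ ∧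
    (∀ (κ' : Kernel (EuclideanSpace ℝ (Fin d)) (EuclideanSpace ℝ (Fin d))),
      IsMarkovKernel κ' → IsCouplingE d (μ.compProd κ') μ ν →
      (∀ᵐ x ∂μ, (∫ y, y ∂(κ' x)) = x) →
      AWrE d 2 M π ≤ AWrE d 2 (μ.compProd κ') π) :=
  stmt11_general d μ ν hμ2 hν2 T hT π hπd hπ hopt κM M hMd hM hmart
end
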